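/- Let d ≥ 2 be even and let m > 0 be a real number. Then the standard basis vector e_0 ∈ ℝ^{d+1} belongs to the simplex S(d,m) if and only if c_{d−1}(m) ≤ m^{d−1}. -/

import Mathlib

/-- The `i`-th vertex of the circulant simplex `S(d,m)` for real `m` (coordinates indexed
by `Fin (d+1)`, i.e. modulo `d+1`): coordinate `j` is `1` if `j = i`, `m` if `j ≡ i+1`,
`-m` if `j ≡ i-1`, and `0` otherwise. -/
def vvecR (d : ℕ) (m : ℝ) (i : Fin (d+1)) : Fin (d+1) → ℝ :=
  fun j => if j = i then 1 else if j = i + 1 then m else if j = i - 1 then -m else 0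

/-- Shifted continuant numbers: `cseq m n = c_{n-1}(m)`, where `c_{-1} = 0`, `c_0 = 1`
and `c_k = c_{k-1} + m^2 c_{k-2}` for `k ≥ 1`. -/
noncomputable def cseq (m : ℝ) : ℕ → ℝ
  | 0 => 0
  | 1 => 1
  | (n+2) => cseq m (n+1) + m ^ 2 * cseq m n

/-!
Writing `x = ∑ i, μ i • v⁽ⁱ⁾` is the linear system `C μ = x` for the circulant matrix `C`
generated by `v⁽⁰⁾ = e₀ + m e₁ - m e₋₁`. The columns of `C` sum to `1`, so every solution
of `C μ = e₀` already has `∑ μ = 1`. An explicit vector `W` built from continuants satisfies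
`C W = κ e₀` with `κ = c_d + 2 m² c_{d-1} > 0`; at coordinate `0` this reduces to Cassini's
identity `c_d c_{d-2} - c_{d-1}² = m^{2(d-1)}`, which holds because `d` is even. Circulant
matrices commute, so `W / κ` is the only solution, and `e₀ ∈ S(d,m)` iff `W ≥ 0`. Finally
`W₁ = m (m^{d-1} - c_{d-1})`, and the nonnegativity of this quantity forces `W ≥ 0`.
-/

open Set Matrix

theorem mem_convexHull_range_iff {R ι E : Type*} [Field R] [LinearOrder R]
    [IsStrictOrderedRing R] [Fintype ι] [AddCommGroup E] [Module R E] (v : ι → E) (x : E) :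
    x ∈ convexHull R (range v) ↔ ∃ μ ∈ stdSimplex R ι, ∑ i, μ i • v i = x := by
  classical
  have hv : range v = Fintype.linearCombination R v '' range fun i => Pi.single i 1 := by
    rw [← range_comp]
    congr 1
    funext i
    simp
  rw [hv, ← LinearMap.image_convexHull, convexHull_rangle_single_eq_stdSimplex]
  simp [Fintype.linearCombination_apply]

theorem smul_eq_of_circulant_mulVec {n R : Type*} [Fintype n] [AddCommGroup n] [DecidableEq n]
    [CommRing R] {c w μ : n → R} {κ : R} (hw : circulant c *ᵥ w = Pi.single 0 κ)
    (hμ : circulant c *ᵥ μ = Pi.single 0 1) : κ • μ = w := by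
  calc κ • μ = circulant (circulant c *ᵥ w) *ᵥ μ := by simp [hw]
    _ = circulant w *ᵥ (circulant c *ᵥ μ) := by
      rw [← circulant_mul, circulant_mul_comm, mulVec_mulVec]
    _ = w := by
      ext i
      simp [hμ]

theorem circulant_single_mulVec_apply {n R : Type*} [Fintype n] [AddCommGroup n] [DecidableEq n]
    [NonAssocSemiring R] (k : n) (a : R) (μ : n → R) (p : n) :
    (circulant (Pi.single k a) *ᵥ μ) p = a * μ (p - k) := by
  simp only [mulVec, dotProduct, circulant_apply]
  rw [← (Equiv.subLeft p).sum_comp]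
  simp [Pi.single_apply]

theorem sum_circulant_mulVec {n R : Type*} [Fintype n] [AddGroup n] [NonUnitalNonAssocSemiring R]
    (c v : n → R) : ∑ p, (circulant c *ᵥ v) p = (∑ k, c k) * ∑ j, v j := by
  simp only [mulVec, dotProduct, circulant_apply]
  rw [Finset.sum_comm, Finset.mul_sum]
  refine Finset.sum_congr rfl fun j _ => ?_
  rw [← Finset.sum_mul]
  congr 1
  exact Fintype.sum_equiv (Equiv.subRight j) _ _ fun _ => rfl

theorem sum_smul_circulant_transpose {n R : Type*} [Fintype n] [Sub n] [CommSemiring R]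
    (c μ : n → R) : ∑ i, μ i • (circulant c)ᵀ i = circulant c *ᵥ μ := by
  ext j
  simp [mulVec, dotProduct, mul_comm]

theorem single_mem_convexHull_circulant_iff {n R : Type*} [Fintype n] [AddCommGroup n]
    [DecidableEq n] [Field R] [LinearOrder R] [IsStrictOrderedRing R] {c w : n → R} {κ : R}
    (hc : ∑ k, c k = 1) (hκ : 0 < κ) (hw : circulant c *ᵥ w = Pi.single 0 κ) :
    Pi.single 0 1 ∈ convexHull R (range fun i => (circulant c)ᵀ i) ↔ ∀ j, 0 ≤ w j := by
  simp only [mem_convexHull_range_iff, sum_smul_circulant_transpose]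
  constructor
  · rintro ⟨μ, ⟨hμ₀, -⟩, hμ⟩ j
    rw [← smul_eq_of_circulant_mulVec hw hμ]
    exact mul_nonneg hκ.le (hμ₀ j)
  · intro hw₀
    have hsum : ∑ j, w j = κ := by
      simpa [hw, hc, Finset.sum_pi_single'] using (sum_circulant_mulVec c w).symm
    refine ⟨κ⁻¹ • w, ⟨fun j => mul_nonneg (inv_nonneg.2 hκ.le) (hw₀ j), ?_⟩, ?_⟩
    · simp only [Pi.smul_apply, smul_eq_mul]
      rw [← Finset.mul_sum, hsum, inv_mul_cancel₀ hκ.ne']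
    · ext j
      simp [mulVec_smul, hw, Pi.single_apply, hκ.ne']

@[simp] theorem cseq_zero (m : ℝ) : cseq m 0 = 0 := rfl

@[simp] theorem cseq_one (m : ℝ) : cseq m 1 = 1 := rfl

theorem cseq_add_two (m : ℝ) (n : ℕ) : cseq m (n + 2) = cseq m (n + 1) + m ^ 2 * cseq m n := rfl

theorem cseq_nonneg (m : ℝ) : ∀ n, 0 ≤ cseq m n
  | 0 => le_rfl
  | 1 => zero_le_one
  | n + 2 => by
    rw [cseq_add_two]
    have := cseq_nonneg m n
    have := cseq_nonneg m (n + 1)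
    positivity

theorem cseq_le_cseq_succ (m : ℝ) : ∀ n, cseq m n ≤ cseq m (n + 1)
  | 0 => zero_le_one
  | n + 1 => by
    rw [cseq_add_two]
    have := cseq_nonneg m n
    nlinarith [sq_nonneg m]

theorem cseq_monotone (m : ℝ) : Monotone (cseq m) := monotone_nat_of_le_succ (cseq_le_cseq_succ m)

theorem cseq_cassini (m : ℝ) (k : ℕ) :
    cseq m (k + 2) * cseq m k - cseq m (k + 1) ^ 2 = -(-m ^ 2) ^ k := by
  induction k with
  | zero => simp [cseq]
  | succ k ih =>
    rw [pow_succ]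
    linear_combination cseq m (k + 1) * cseq_add_two m (k + 1) - m ^ 2 * ih
      - cseq m (k + 2) * cseq_add_two m k

/-- `W_j = P_j / m^j`, where `P_j = c_d (c_j - c_{j-1}) + m² (m^{d-1} - c_{d-1}) c_{j-1}` solves
the continuant recurrence, which is what `C W = 0` says at the interior coordinates; the initial
values are chosen so that the equation at coordinate `d` holds as well. -/
noncomputable def e0Weight (d : ℕ) (m : ℝ) (j : ℕ) : ℝ :=
  (cseq m (d + 1) * (cseq m (j + 1) - cseq m j) + m ^ 2 * (m ^ (d - 1) - cseq m d) * cseq m j)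
    / m ^ j

section e0Weight

variable {d : ℕ} {m : ℝ}

theorem e0Weight_equation_succ (hm : m ≠ 0) (j : ℕ) :
    e0Weight d m (j + 1) + m * e0Weight d m j - m * e0Weight d m (j + 2) = 0 := by
  simp only [e0Weight, cseq_add_two m (j + 1), cseq_add_two m j]
  field_simp
  ring

theorem e0Weight_equation_last (hm : m ≠ 0) (k : ℕ) :
    e0Weight (k + 1) m (k + 1) + m * e0Weight (k + 1) m k - m * e0Weight (k + 1) m 0 = 0 := by
  simp only [e0Weight, add_tsub_cancel_right, cseq_zero, zero_add, cseq_one]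
  field_simp
  linear_combination (m ^ k * cseq m (k + 2) + m ^ (k + 2) * (cseq m (k + 1) - m ^ k))
    * cseq_add_two m k

theorem e0Weight_one (hm : m ≠ 0) : e0Weight d m 1 = m * (m ^ (d - 1) - cseq m d) := by
  simp only [e0Weight, cseq_add_two m 0, zero_add, cseq_one, cseq_zero, mul_zero, add_zero,
    sub_self, mul_one, pow_one]
  field_simp

theorem e0Weight_equation_zero (hm : m ≠ 0) (hd : 2 ≤ d) (hde : Even d) :
    e0Weight d m 0 + m * e0Weight d m d - m * e0Weight d m 1
      = cseq m (d + 1) + 2 * m ^ 2 * cseq m d := by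
  obtain ⟨k, rfl⟩ : ∃ k, d = k + 1 := ⟨d - 1, by omega⟩
  have hk : Odd k := Nat.not_even_iff_odd.1 (Nat.even_add_one.1 hde)
  have h := cseq_cassini m k
  rw [hk.neg_pow] at h
  simp only [e0Weight, add_tsub_cancel_right]
  field_simp
  simp only [zero_add, cseq_zero, cseq_one, cseq_add_two m 0]
  linear_combination m * cseq m (k + 2) * cseq_add_two m k + m ^ 3 * h

theorem e0Weight_nonneg (hm : 0 < m) (hβ : cseq m d ≤ m ^ (d - 1)) (j : ℕ) :
    0 ≤ e0Weight d m j := by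
  have := cseq_nonneg m (d + 1)
  have := cseq_nonneg m j
  have := sub_nonneg.2 (cseq_le_cseq_succ m j)
  have := sub_nonneg.2 hβ
  unfold e0Weight
  positivity

end e0Weight

section vvecR

variable {d : ℕ} {m : ℝ}

theorem vvecR_apply (i j : Fin (d + 1)) : vvecR d m i j = vvecR d m 0 (j - i) := by
  have h1 : j = i + 1 ↔ j - i = 1 := by rw [sub_eq_iff_eq_add']
  have h2 : j = i - 1 ↔ j - i = -1 := by rw [sub_eq_iff_eq_add', sub_eq_add_neg]
  simp only [vvecR, zero_add, zero_sub, sub_eq_zero, h1, h2]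

theorem vvecR_zero (hd : 2 ≤ d) :
    vvecR d m 0 = Pi.single 0 1 + Pi.single 1 m - Pi.single (-1) m := by
  obtain ⟨k, rfl⟩ : ∃ k, d = k + 2 := ⟨d - 2, by omega⟩
  have h01 : (0 : Fin (k + 3)) ≠ 1 := by simp
  have h0n : (0 : Fin (k + 3)) ≠ -1 := by simp
  have h1n : (1 : Fin (k + 3)) ≠ -1 := by simp [Fin.ext_iff, Fin.coe_neg_one]
  ext j
  simp only [vvecR, Pi.add_apply, Pi.sub_apply, Pi.single_apply, zero_add, zero_sub]
  split_ifs <;> simp_all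

theorem circulant_vvecR_mulVec_apply (hd : 2 ≤ d) (μ : Fin (d + 1) → ℝ) (p : Fin (d + 1)) :
    (circulant (vvecR d m 0) *ᵥ μ) p = μ p + m * μ (p - 1) - m * μ (p + 1) := by
  simp [vvecR_zero hd, circulant_add, circulant_sub, add_mulVec, sub_mulVec,
    circulant_single_mulVec_apply]

theorem sum_vvecR_zero (hd : 2 ≤ d) : ∑ j, vvecR d m 0 j = 1 := by
  simp [vvecR_zero hd, Finset.sum_add_distrib]

theorem circulant_vvecR_mulVec_e0Weight (hm : m ≠ 0) (hd : 2 ≤ d) (hde : Even d) :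
    circulant (vvecR d m 0) *ᵥ (fun j : Fin (d + 1) => e0Weight d m j)
      = Pi.single 0 (cseq m (d + 1) + 2 * m ^ 2 * cseq m d) := by
  ext p
  rw [circulant_vvecR_mulVec_apply hd]
  rcases eq_or_ne p 0 with rfl | hp0
  · have h1 : 1 % (d + 1) = 1 := Nat.mod_eq_of_lt (by omega)
    simpa [h1, Fin.coe_neg_one] using e0Weight_equation_zero hm hd hde
  rw [Pi.single_eq_of_ne hp0]
  rcases eq_or_ne p (Fin.last d) with rfl | hpl
  · obtain ⟨k, rfl⟩ : ∃ k, d = k + 1 := ⟨d - 1, by omega⟩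
    simpa [Fin.coe_sub_one, hp0] using e0Weight_equation_last hm k
  · obtain ⟨j, hj⟩ : ∃ j, p.val = j + 1 := Nat.exists_eq_add_one.2 (Fin.pos_iff_ne_zero.2 hp0)
    simpa [Fin.coe_sub_one, Fin.val_add_one, hp0, hpl, hj] using e0Weight_equation_succ hm j

end vvecR

theorem stmt13 (d : ℕ) (hd : 2 ≤ d) (hde : Even d) (m : ℝ) (hm : 0 < m) :
    (fun j : Fin (d+1) => if j = 0 then (1 : ℝ) else 0)
        ∈ convexHull ℝ (Set.range (vvecR d m))
      ↔ cseq m d ≤ m ^ (d - 1) := by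
  have hκ : 0 < cseq m (d + 1) + 2 * m ^ 2 * cseq m d := by
    have := cseq_nonneg m d
    have : 1 ≤ cseq m (d + 1) := cseq_monotone m (by omega : 1 ≤ d + 1)
    positivity
  have he₀ : (fun j : Fin (d + 1) => if j = 0 then (1 : ℝ) else 0) = Pi.single 0 1 := by
    ext j
    simp [Pi.single_apply]
  have hvertices : vvecR d m = fun i => (circulant (vvecR d m 0))ᵀ i :=
    funext fun i => funext (vvecR_apply i)
  rw [he₀, hvertices, single_mem_convexHull_circulant_iff (sum_vvecR_zero hd) hκ
    (circulant_vvecR_mulVec_e0Weight hm.ne' hd hde)]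
  refine ⟨fun hw => ?_, fun hβ j => e0Weight_nonneg hm hβ j⟩
  have h1 : 1 % (d + 1) = 1 := Nat.mod_eq_of_lt (by omega)
  have hw1 : 0 ≤ m * (m ^ (d - 1) - cseq m d) := by
    simpa [Fin.val_one', h1, e0Weight_one hm.ne'] using hw 1
  exact sub_nonneg.1 ((mul_nonneg_iff_of_pos_left hm).1 hw1)
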